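/- arXiv:2410.12494 — 3 statements merged into one kernel-verified Lean document; each statement's English description precedes it below -/
import Mathlib

section
/- For any finite poset P, point i ∈ P, and finite poset Q, the number of linear extensions e(Q) divides the number of linear extensions e(P ∘_i Q). -/
open scoped Lex

/-- A finite poset is a chain if any two elements are comparable. -/
def IsChainPoset (R : Type*) [PartialOrder R] : Prop := ∀ x y : R, x ≤ y ∨ y ≤ x

/-- Linear extensions of a finite poset `R`: order-preserving bijective labelings
by `{1, …, |R|}` (here modeled by `Fin (card R)`). -/
def LinExt (R : Type*) [PartialOrder R] [Fintype R] :=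
  {f : R ≃ Fin (Fintype.card R) // ∀ x y : R, x < y → f x < f y}

/-- `e(R)`: the number of linear extensions of `R`. -/
noncomputable def numExt (R : Type*) [PartialOrder R] [Fintype R] : ℕ := Nat.card (LinExt R)

/-- The number of linear extensions of `R` placing `x` below `y`. -/
noncomputable def numBelow (R : Type*) [PartialOrder R] [Fintype R] (x y : R) : ℕ :=
  Nat.card {f : LinExt R // f.1 x < f.1 y}

/-- The number of linear extensions of `R` placing `a` below `b` and `c` below `d`. -/
noncomputable def numBelow2 (R : Type*) [PartialOrder R] [Fintype R] (a b c d : R) : ℕ :=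
  Nat.card {f : LinExt R // f.1 a < f.1 b ∧ f.1 c < f.1 d}

/-- `ℙ_R(x < y)`: the fraction of linear extensions of `R` placing `x` below `y`. -/
noncomputable def probBelow (R : Type*) [PartialOrder R] [Fintype R] (x y : R) : ℚ :=
  (numBelow R x y : ℚ) / (numExt R : ℚ)

/-- `δ(R) = max_{x ≠ y} min {ℙ_R(x<y), ℙ_R(y<x)}` (and `0` for chains / small posets). -/
noncomputable def delta (R : Type*) [PartialOrder R] [Fintype R] [DecidableEq R] : ℚ :=
  Finset.univ.fold max 0 (fun xy : R × R =>
    if xy.1 = xy.2 then 0 else min (probBelow R xy.1 xy.2) (probBelow R xy.2 xy.1))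

/-- The lexicographic sum `P ∘_i Q`: the poset obtained from `P` by replacing the
point `i` by the poset `Q`, elements of `Q` inheriting all comparabilities of `i`. -/
def LexAt (P : Type*) (i : P) (Q : Type*) := {p : P // p ≠ i} ⊕ Q

instance LexAt.instPartialOrder (P : Type*) [PartialOrder P] (i : P) (Q : Type*)
    [PartialOrder Q] : PartialOrder (LexAt P i Q) where
  le x y :=
    match x, y with
    | .inl a, .inl b => a.1 ≤ b.1
    | .inl a, .inr _ => a.1 < i
    | .inr _, .inl b => i < b.1
    | .inr q, .inr q' => q ≤ q'
  le_refl x := by cases x <;> exact le_refl _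
  le_trans x y z hxy hyz := by
    cases x <;> cases y <;> cases z <;>
    first
      | exact hxy
      | exact hyz
      | exact le_trans hxy hyz
      | exact lt_of_le_of_lt hxy hyz
      | exact lt_of_lt_of_le hxy hyz
      | exact le_of_lt (lt_trans hxy hyz)
      | exact absurd (lt_trans hxy hyz) (lt_irrefl i)
  le_antisymm x y hxy hyx := by
    cases x <;> cases y <;>
    first
      | exact congrArg Sum.inl (Subtype.ext (le_antisymm hxy hyx))
      | exact congrArg Sum.inr (le_antisymm hxy hyx)
      | exact absurd (lt_trans hxy hyx) (lt_irrefl i)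
      | exact absurd (lt_trans hyx hxy) (lt_irrefl i)

instance LexAt.instFintype (P : Type*) [Fintype P] [DecidableEq P] (i : P) (Q : Type*)
    [Fintype Q] : Fintype (LexAt P i Q) := inferInstanceAs (Fintype ({p : P // p ≠ i} ⊕ Q))

instance LexAt.instDecidableEq (P : Type*) [DecidableEq P] (i : P) (Q : Type*)
    [DecidableEq Q] : DecidableEq (LexAt P i Q) :=
  inferInstanceAs (DecidableEq ({p : P // p ≠ i} ⊕ Q))

/-!
A linear extension `f` of `P ∘_i Q` is determined by the order `g` in which it lists `Q` together
with the extension obtained from `f` by refilling the positions of `Q` in a fixed order `g₀`.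
Since all elements of `Q` have the same relations to the rest of `P ∘_i Q`, every such pair
occurs, so `e(P ∘_i Q) = e(Q) · #{f' | f' lists Q in the order g₀}`.
-/

open Function

section Labelling

variable {α β : Type*}

theorem Equiv.eq_of_lt_iff_lt {n : ℕ} {g g' : α ≃ Fin n}
    (h : ∀ a b, g a < g b ↔ g' a < g' b) : g = g' := by
  let e : Fin n ≃o Fin n :=
    { g.symm.trans g' with
      map_rel_iff' := fun {a b} => by
        simpa [not_lt] using (h (g.symm b) (g.symm a)).not.symm }
  have he : ∀ a, g' (g.symm a) = a := fun a => congrArg (· a) (Subsingleton.elim e (.refl _))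
  ext q
  simpa using congrArg Fin.val (he (g q)).symm

theorem exists_equiv_fin_lt_iff_lt [Fintype α] [LinearOrder β] {f : α → β} (hf : Injective f) :
    ∃ g : α ≃ Fin (Fintype.card α), ∀ a b, g a < g b ↔ f a < f b := by
  let : LinearOrder α := LinearOrder.lift' f hf
  exact ⟨(Fintype.orderIsoFinOfCardEq α rfl).symm.toEquiv, fun a b =>
    (Fintype.orderIsoFinOfCardEq α rfl).symm.lt_iff_lt⟩

end Labelling

section LinExt

variable {R : Type*} [PartialOrder R] [Fintype R]

instance LinExt.instNonempty : Nonempty (LinExt R) := by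
  obtain ⟨g, hg⟩ := exists_equiv_fin_lt_iff_lt (f := toLinearExtension (α := R)) injective_id
  exact ⟨⟨g, fun x y hxy => (hg x y).2 <|
    toLinearExtension.monotone.strictMono_of_injective injective_id hxy⟩⟩

theorem LinExt.ext {f f' : LinExt R} (h : ∀ x, f.1 x = f'.1 x) : f = f' :=
  Subtype.ext (Equiv.ext h)

end LinExt

namespace LexAt

variable {P Q : Type*} [PartialOrder P] [PartialOrder Q] {i : P}

theorem inr_lt_inr {q q' : Q} : @LT.lt (LexAt P i Q) _ (.inr q) (.inr q') ↔ q < q' :=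
  (lt_iff_le_not_ge (α := LexAt P i Q)).trans (lt_iff_le_not_ge (a := q) (b := q')).symm

theorem inl_lt_inr {a : {p : P // p ≠ i}} {q : Q} :
    @LT.lt (LexAt P i Q) _ (.inl a) (.inr q) ↔ a.1 < i :=
  (lt_iff_le_not_ge (α := LexAt P i Q)).trans ⟨And.left, fun h => ⟨h, (lt_asymm h ·)⟩⟩

theorem inr_lt_inl {a : {p : P // p ≠ i}} {q : Q} :
    @LT.lt (LexAt P i Q) _ (.inr q) (.inl a) ↔ i < a.1 :=
  (lt_iff_le_not_ge (α := LexAt P i Q)).trans ⟨And.left, fun h => ⟨h, (lt_asymm h ·)⟩⟩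

variable [Fintype P] [DecidableEq P] [Fintype Q]

theorem exists_linExt_lt_iff (f : LinExt (LexAt P i Q)) :
    ∃ g : LinExt Q, ∀ q q', g.1 q < g.1 q' ↔ f.1 (.inr q) < f.1 (.inr q') := by
  obtain ⟨g, hg⟩ := exists_equiv_fin_lt_iff_lt (f.1.injective.comp Sum.inr_injective)
  exact ⟨⟨g, fun q q' h => (hg q q').2 (f.2 _ _ (inr_lt_inr.2 h))⟩, hg⟩

noncomputable def innerExt (f : LinExt (LexAt P i Q)) : LinExt Q :=
  (exists_linExt_lt_iff f).choose

theorem innerExt_lt_iff (f : LinExt (LexAt P i Q)) (q q' : Q) :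
    (innerExt f).1 q < (innerExt f).1 q' ↔ f.1 (.inr q) < f.1 (.inr q') :=
  (exists_linExt_lt_iff f).choose_spec q q'

theorem innerExt_eq_of_lt_iff {f : LinExt (LexAt P i Q)} {g : LinExt Q}
    (h : ∀ q q', g.1 q < g.1 q' ↔ f.1 (.inr q) < f.1 (.inr q')) : innerExt f = g :=
  Subtype.ext <| Equiv.eq_of_lt_iff_lt fun q q' => (innerExt_lt_iff f q q').trans (h q q').symm

/-- `f` with the positions it gives to `Q` refilled in the order `g`. -/
noncomputable def relabelEquiv (f : LinExt (LexAt P i Q)) (g : LinExt Q) :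
    LexAt P i Q ≃ Fin (Fintype.card (LexAt P i Q)) :=
  (Equiv.sumCongr (.refl _) (g.1.trans (innerExt f).1.symm)).trans f.1

@[simp]
theorem relabelEquiv_inr (f : LinExt (LexAt P i Q)) (g : LinExt Q) (q : Q) :
    relabelEquiv f g (.inr q) = f.1 (.inr ((innerExt f).1.symm (g.1 q))) := rfl

theorem relabelEquiv_inr_lt_inr_iff (f : LinExt (LexAt P i Q)) (g : LinExt Q) (q q' : Q) :
    relabelEquiv f g (.inr q) < relabelEquiv f g (.inr q') ↔ g.1 q < g.1 q' := by
  simp [← innerExt_lt_iff]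

theorem relabelEquiv_strictMono (f : LinExt (LexAt P i Q)) (g : LinExt Q) :
    ∀ x y, x < y → relabelEquiv f g x < relabelEquiv f g y := by
  rintro (a | q) (b | q') hxy
  · exact f.2 _ _ hxy
  · exact f.2 _ _ (inl_lt_inr.2 (inl_lt_inr.1 hxy))
  · exact f.2 _ _ (inr_lt_inl.2 (inr_lt_inl.1 hxy))
  · exact (relabelEquiv_inr_lt_inr_iff f g q q').2 (g.2 _ _ (inr_lt_inr.1 hxy))

noncomputable def relabel (f : LinExt (LexAt P i Q)) (g : LinExt Q) : LinExt (LexAt P i Q) :=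
  ⟨relabelEquiv f g, relabelEquiv_strictMono f g⟩

theorem innerExt_relabel (f : LinExt (LexAt P i Q)) (g : LinExt Q) :
    innerExt (relabel f g) = g :=
  innerExt_eq_of_lt_iff fun q q' => (relabelEquiv_inr_lt_inr_iff f g q q').symm

theorem relabel_relabel (f : LinExt (LexAt P i Q)) (g g' : LinExt Q) :
    relabel (relabel f g) g' = relabel f g' := by
  refine LinExt.ext ?_
  rintro (a | q)
  · rfl
  · change relabelEquiv (relabel f g) g' (.inr q) = relabelEquiv f g' (.inr q)
    rw [relabelEquiv_inr, innerExt_relabel]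
    simp [relabel]

theorem relabel_innerExt (f : LinExt (LexAt P i Q)) : relabel f (innerExt f) = f := by
  refine LinExt.ext ?_
  rintro (a | q)
  · rfl
  · simp [relabel]

noncomputable def linExtEquivProd (g₀ : LinExt Q) :
    LinExt (LexAt P i Q) ≃ LinExt Q × {f : LinExt (LexAt P i Q) // innerExt f = g₀} where
  toFun f := (innerExt f, ⟨relabel f g₀, innerExt_relabel f g₀⟩)
  invFun fg := relabel fg.2.1 fg.1
  left_inv f := by simp only [relabel_relabel, relabel_innerExt]
  right_inv := by
    rintro ⟨g, f, rfl⟩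
    simp only [innerExt_relabel, relabel_relabel, relabel_innerExt]

end LexAt

/-- `e(Q)` divides `e(P ∘_i Q)`. -/
theorem numExt_dvd_numExt_lexAt (P Q : Type) [PartialOrder P] [Fintype P] [DecidableEq P]
    [PartialOrder Q] [Fintype Q] (i : P) :
    numExt Q ∣ numExt (LexAt P i Q) := by
  obtain ⟨g₀⟩ : Nonempty (LinExt Q) := inferInstance
  refine ⟨Nat.card {f : LinExt (LexAt P i Q) // LexAt.innerExt f = g₀}, ?_⟩
  rw [numExt, numExt, Nat.card_congr (LexAt.linExtEquivProd g₀), Nat.card_prod]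
end

section
/- Let P be a finite poset, i ∈ P, Q a finite poset, and x, y ∈ Q. Then the proportion of linear extensions f of P ∘_i Q with f(x) < f(y) equals the proportion of linear extensions g of Q with g(x) < g(y); that is, ℙ_{P∘_iQ}(x < y) = ℙ_Q(x < y). -/
open scoped Lex

/-!
A linear extension `f` of `P ∘ᵢ Q` restricts to a linear extension of `Q` (the relative order of
the positions `f` gives to `Q`). Conversely, since every element of `P ∖ {i}` compares with all of
`Q` in the same way, the block of positions occupied by `Q` can be refilled according to any
linear extension `g` of `Q`; the result restricts to `g`, and refilling it with the restriction
of `f` gives back `f`. So all fibres of the restriction map have the same size, and the event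
`f(x) < f(y)` is the preimage of the event `g(x) < g(y)`.
-/
theorem Nat.card_preimage_mul_card_eq_of_reindex {α β : Type*} (σ : α → β)
    (reindex : α → β → α) (σ_reindex : ∀ a b, σ (reindex a b) = b)
    (reindex_reindex : ∀ a b, reindex (reindex a b) (σ a) = a) (p : β → Prop) :
    Nat.card {a // p (σ a)} * Nat.card β = Nat.card α * Nat.card {b // p b} := by
  rw [← Nat.card_prod, ← Nat.card_prod]
  refine Nat.card_congr
    { toFun := fun ab => (reindex ab.1 ab.2, ⟨σ ab.1, ab.1.2⟩)
      invFun := fun ab => (⟨reindex ab.1 ab.2, by rw [σ_reindex]; exact ab.2.2⟩, σ ab.1)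
      left_inv := fun ab => ?_
      right_inv := fun ab => ?_ }
  · exact Prod.ext (Subtype.ext (reindex_reindex _ _)) (σ_reindex _ _)
  · exact Prod.ext (reindex_reindex _ _) (Subtype.ext (σ_reindex _ _))

instance LinExt.instFinite (R : Type*) [PartialOrder R] [Fintype R] : Finite (LinExt R) :=
  Subtype.finite

theorem LinExt.nonempty (R : Type*) [PartialOrder R] [Fintype R] : Nonempty (LinExt R) := by
  let _ : Fintype (LinearExtension R) := inferInstanceAs (Fintype R)
  let e := (Fintype.orderIsoFinOfCardEq (LinearExtension R) rfl).symm
  exact ⟨⟨e.toEquiv, fun a b hab =>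
    e.strictMono ((toLinearExtension.monotone hab.le).lt_of_ne hab.ne)⟩⟩

theorem numExt_ne_zero (R : Type*) [PartialOrder R] [Fintype R] : numExt R ≠ 0 :=
  have := LinExt.nonempty R
  Nat.card_pos.ne'

namespace LexAt

variable {P Q : Type*} [PartialOrder P] [PartialOrder Q] {i : P}

/- Typed in `LexAt P i Q`, so that `<` between them is the order of `P ∘ᵢ Q`: the bare
`Sum.inl a` is typed as a sum and would pick up the order of `Sum`. -/
def inl (a : {p : P // p ≠ i}) : LexAt P i Q := Sum.inl a

def inr (q : Q) : LexAt P i Q := Sum.inr q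

theorem inl_lt_inr_congr {a : {p : P // p ≠ i}} {q : Q} (q' : Q)
    (h : (inl a : LexAt P i Q) < inr q) : (inl a : LexAt P i Q) < inr q' := h

theorem inr_lt_inl_congr {a : {p : P // p ≠ i}} {q : Q} (q' : Q)
    (h : (inr q : LexAt P i Q) < inl a) : (inr q' : LexAt P i Q) < inl a := h

theorem inr_lt_inr_iff {q q' : Q} : (inr q : LexAt P i Q) < inr q' ↔ q < q' :=
  lt_iff_le_not_ge.trans (lt_iff_le_not_ge (a := q) (b := q')).symm

variable [Fintype P] [DecidableEq P] [Fintype Q]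

def blockPositions (f : LinExt (LexAt P i Q)) : Finset (Fin (Fintype.card (LexAt P i Q))) :=
  Finset.univ.map (Function.Embedding.inr.trans f.1.toEmbedding)

theorem apply_inr_mem_blockPositions (f : LinExt (LexAt P i Q)) (q : Q) :
    f.1 (Sum.inr q) ∈ blockPositions f :=
  Finset.mem_map_of_mem _ (Finset.mem_univ q)

theorem card_blockPositions (f : LinExt (LexAt P i Q)) :
    (blockPositions f).card = Fintype.card Q := by
  simp [blockPositions]

noncomputable def blockEnum (f : LinExt (LexAt P i Q)) :
    Fin (Fintype.card Q) ↪o Fin (Fintype.card (LexAt P i Q)) :=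
  (blockPositions f).orderEmbOfFin (card_blockPositions f)

theorem exists_blockEnum_eq (f : LinExt (LexAt P i Q)) (j : Fin (Fintype.card Q)) :
    ∃ q, blockEnum f j = f.1 (Sum.inr q) := by
  obtain ⟨q, -, hq⟩ := Finset.mem_map.1 (Finset.orderEmbOfFin_mem _ (card_blockPositions f) j)
  exact ⟨q, hq.symm⟩

theorem apply_inl_ne_blockEnum (f : LinExt (LexAt P i Q)) (a : {p : P // p ≠ i})
    (j : Fin (Fintype.card Q)) : f.1 (Sum.inl a) ≠ blockEnum f j := by
  obtain ⟨q, hq⟩ := exists_blockEnum_eq f j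
  rw [hq]
  exact fun h => Sum.inl_ne_inr (f.1.injective h)

theorem apply_inl_lt_blockEnum (f : LinExt (LexAt P i Q)) {a : {p : P // p ≠ i}} {q : Q}
    (h : (inl a : LexAt P i Q) < inr q) (j : Fin (Fintype.card Q)) :
    f.1 (Sum.inl a) < blockEnum f j := by
  obtain ⟨q', hq'⟩ := exists_blockEnum_eq f j
  rw [hq']
  exact f.2 _ _ (inl_lt_inr_congr q' h)

theorem blockEnum_lt_apply_inl (f : LinExt (LexAt P i Q)) {a : {p : P // p ≠ i}} {q : Q}
    (h : (inr q : LexAt P i Q) < inl a) (j : Fin (Fintype.card Q)) :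
    blockEnum f j < f.1 (Sum.inl a) := by
  obtain ⟨q', hq'⟩ := exists_blockEnum_eq f j
  rw [hq']
  exact f.2 _ _ (inr_lt_inl_congr q' h)

noncomputable def blockRank (f : LinExt (LexAt P i Q)) (q : Q) : Fin (Fintype.card Q) :=
  ((blockPositions f).orderIsoOfFin (card_blockPositions f)).symm
    ⟨f.1 (Sum.inr q), apply_inr_mem_blockPositions f q⟩

theorem blockEnum_blockRank (f : LinExt (LexAt P i Q)) (q : Q) :
    blockEnum f (blockRank f q) = f.1 (Sum.inr q) := by
  rw [blockEnum, blockRank, ← Finset.coe_orderIsoOfFin_apply, OrderIso.apply_symm_apply]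

theorem blockRank_lt_blockRank_iff (f : LinExt (LexAt P i Q)) {a b : Q} :
    blockRank f a < blockRank f b ↔ f.1 (Sum.inr a) < f.1 (Sum.inr b) := by
  rw [← (blockEnum f).lt_iff_lt, blockEnum_blockRank, blockEnum_blockRank]

noncomputable def restrict (f : LinExt (LexAt P i Q)) : LinExt Q := by
  refine ⟨Equiv.ofBijective (blockRank f) ?_, fun a b hab => ?_⟩
  · refine (Fintype.bijective_iff_injective_and_card _).2
      ⟨fun a b h => ?_, (Fintype.card_fin _).symm⟩
    have := congrArg (blockEnum f) h
    rw [blockEnum_blockRank, blockEnum_blockRank] at this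
    exact Sum.inr_injective (f.1.injective this)
  · exact (blockRank_lt_blockRank_iff f).2 (f.2 _ _ (inr_lt_inr_iff.2 hab))

theorem restrict_lt_restrict_iff (f : LinExt (LexAt P i Q)) {a b : Q} :
    (restrict f).1 a < (restrict f).1 b ↔ f.1 (Sum.inr a) < f.1 (Sum.inr b) :=
  blockRank_lt_blockRank_iff f

noncomputable def reorder (f : LinExt (LexAt P i Q)) (g : LinExt Q) : LinExt (LexAt P i Q) := by
  let F : LexAt P i Q → Fin (Fintype.card (LexAt P i Q)) :=
    Sum.elim (fun a => f.1 (Sum.inl a)) (fun q => blockEnum f (g.1 q))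
  have hF : F.Injective := by
    rintro (a | q) (b | q') h
    · exact f.1.injective h
    · exact absurd h (apply_inl_ne_blockEnum f a _)
    · exact absurd h.symm (apply_inl_ne_blockEnum f b _)
    · exact congrArg Sum.inr (g.1.injective ((blockEnum f).injective h))
  have hF' : F.Bijective :=
    (Fintype.bijective_iff_injective_and_card F).2 ⟨hF, (Fintype.card_fin _).symm⟩
  refine ⟨Equiv.ofBijective F hF', ?_⟩
  rintro (a | q) (b | q') h
  · exact f.2 _ _ h
  · exact apply_inl_lt_blockEnum f h _
  · exact blockEnum_lt_apply_inl f h _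
  · exact (blockEnum f).strictMono (g.2 _ _ (inr_lt_inr_iff.1 h))

theorem blockPositions_reorder (f : LinExt (LexAt P i Q)) (g : LinExt Q) :
    blockPositions (reorder f g) = blockPositions f := by
  refine Finset.eq_of_subset_of_card_le (fun v hv => ?_)
    (by rw [card_blockPositions, card_blockPositions])
  obtain ⟨q, -, rfl⟩ := Finset.mem_map.1 hv
  exact Finset.orderEmbOfFin_mem (blockPositions f) (card_blockPositions f) _

theorem blockEnum_reorder (f : LinExt (LexAt P i Q)) (g : LinExt Q) :
    blockEnum (reorder f g) = blockEnum f :=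
  (Finset.orderEmbOfFin_unique' _ fun j => blockPositions_reorder f g ▸
    Finset.orderEmbOfFin_mem _ (card_blockPositions f) j).symm

theorem restrict_reorder (f : LinExt (LexAt P i Q)) (g : LinExt Q) :
    restrict (reorder f g) = g := by
  refine Subtype.ext (Equiv.ext fun q => (blockEnum (reorder f g)).injective ?_)
  rw [restrict, Equiv.ofBijective_apply, blockEnum_blockRank, blockEnum_reorder]
  rfl

theorem reorder_reorder (f : LinExt (LexAt P i Q)) (g : LinExt Q) :
    reorder (reorder f g) (restrict f) = f := by
  refine Subtype.ext (Equiv.ext ?_)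
  rintro (a | q)
  · rfl
  · show blockEnum (reorder f g) (blockRank f q) = f.1 (Sum.inr q)
    rw [blockEnum_reorder, blockEnum_blockRank]

end LexAt

/-- for `x, y ∈ Q`, `ℙ_{P∘ᵢQ}(x < y) = ℙ_Q(x < y)`. -/
theorem probBelow_lexAt (P Q : Type) [PartialOrder P] [Fintype P] [DecidableEq P]
    [PartialOrder Q] [Fintype Q] (i : P) (x y : Q) :
    probBelow (LexAt P i Q) (Sum.inr x) (Sum.inr y) = probBelow Q x y := by
  have key : numBelow (LexAt P i Q) (Sum.inr x) (Sum.inr y) * numExt Q =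
      numExt (LexAt P i Q) * numBelow Q x y := by
    simpa only [numBelow, numExt, LexAt.restrict_lt_restrict_iff] using
      Nat.card_preimage_mul_card_eq_of_reindex LexAt.restrict LexAt.reorder
        LexAt.restrict_reorder LexAt.reorder_reorder (fun g => g.1 x < g.1 y)
  unfold probBelow
  rw [div_eq_div_iff (by exact_mod_cast numExt_ne_zero _)
    (by exact_mod_cast numExt_ne_zero _)]
  exact_mod_cast key.trans (mul_comm _ _)
end

section
/- Let Q be a finite poset satisfying the GPC with witnessing consecutive comparisons (x₁,y₁) and, for each outcome of the first comparison, a second comparison, such that e(Q) > t₁ + t₂ for every outcome. Let P be a finite poset, i ∈ P, and let k = e(P ∘_i Q)/e(Q). Then, applying the same comparisons inside the copy of Q in P ∘_i Q, the resulting counts satisfy t₀′ = k·t₀, t₁′ = k·t₁, and t₂′ = k·t₂. -/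
open scoped Lex

/-!
Every element of `P ∘ᵢ Q` outside the copy of `Q` compares in the same way with all of `Q`.
So in a linear extension the positions occupied by `Q` may be refilled by the elements of `Q`
in the order of any linear extension of `Q`. Refilling according to a fixed `h₀` and recording
the restriction to `Q` gives a bijection `L(P ∘ᵢ Q) ≃ L(Q) × F`, where `F` is the fibre of the
restriction over `h₀`. Hence `e(P ∘ᵢ Q) = |F| · e(Q)`, and every event that depends only on the
relative order of elements of `Q` is counted `|F| = k` times as often in `P ∘ᵢ Q` as in `Q`.
-/

open Finset

namespace Equiv

variable {R Q : Type*} [Fintype Q] {N : ℕ} (ι : Q ↪ R) (f : R ≃ Fin N)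

def positions : Finset (Fin N) := univ.map (ι.trans f.toEmbedding)

variable {ι f} in
lemma mem_positions {j : Fin N} : j ∈ f.positions ι ↔ ∃ q, f (ι q) = j := by
  simp [positions]

lemma apply_mem_positions (q : Q) : f (ι q) ∈ f.positions ι := mem_positions.2 ⟨q, rfl⟩

lemma card_positions : (f.positions ι).card = Fintype.card Q := by simp [positions]

noncomputable def positionsIso : Fin (Fintype.card Q) ≃o f.positions ι :=
  (f.positions ι).orderIsoOfFin (f.card_positions ι)

lemma exists_apply_eq_positionsIso (j : Fin (Fintype.card Q)) :
    ∃ q, f (ι q) = f.positionsIso ι j :=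
  mem_positions.1 (f.positionsIso ι j).2

noncomputable def relativeRank : Q ≃ Fin (Fintype.card Q) :=
  Equiv.ofBijective (fun q => (f.positionsIso ι).symm ⟨f (ι q), f.apply_mem_positions ι q⟩)
    ((Fintype.bijective_iff_injective_and_card _).2
      ⟨fun _ _ h => ι.injective <| f.injective <|
          congrArg Subtype.val ((f.positionsIso ι).symm.injective h),
        (Fintype.card_fin _).symm⟩)

@[simp]
lemma positionsIso_symm_apply_mk (q : Q) :
    (f.positionsIso ι).symm ⟨f (ι q), f.apply_mem_positions ι q⟩ = f.relativeRank ι q := rfl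

@[simp]
lemma positionsIso_relativeRank (q : Q) :
    (f.positionsIso ι (f.relativeRank ι q) : Fin N) = f (ι q) := by
  simp [← positionsIso_symm_apply_mk]

lemma relativeRank_lt_iff (q q' : Q) :
    f.relativeRank ι q < f.relativeRank ι q' ↔ f (ι q) < f (ι q') := by
  rw [← (f.positionsIso ι).lt_iff_lt, ← Subtype.coe_lt_coe, positionsIso_relativeRank,
    positionsIso_relativeRank]

/-- Keeps the positions `f` assigns outside the image of `ι` and hands out the positions of the
image to the elements of `Q` in the order given by `h`. -/
noncomputable def reorder (h : Q ≃ Fin (Fintype.card Q)) : R ≃ Fin N :=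
  f.trans <| Perm.ofSubtype <|
    (f.positionsIso ι).symm.toEquiv.trans <| (f.relativeRank ι).symm.trans <|
      h.trans (f.positionsIso ι).toEquiv

variable (h : Q ≃ Fin (Fintype.card Q))

@[simp]
lemma reorder_apply_embedding (q : Q) : f.reorder ι h (ι q) = f.positionsIso ι (h q) := by
  simp [reorder, Perm.ofSubtype_apply_of_mem _ (f.apply_mem_positions ι q)]

lemma reorder_apply_of_notMem_range {x : R} (hx : x ∉ Set.range ι) : f.reorder ι h x = f x := by
  refine Perm.ofSubtype_apply_of_not_mem _ fun hfx => hx ?_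
  obtain ⟨q, hq⟩ := mem_positions.1 hfx
  exact ⟨q, f.injective hq⟩

lemma positions_reorder : (f.reorder ι h).positions ι = f.positions ι := by
  refine eq_of_subset_of_card_le (fun j hj => ?_) (by rw [card_positions, card_positions])
  obtain ⟨q, rfl⟩ := mem_positions.1 hj
  simp

variable {ι} in
lemma coe_positionsIso_congr {g : R ≃ Fin N} (hfg : g.positions ι = f.positions ι)
    (j : Fin (Fintype.card Q)) : (g.positionsIso ι j : Fin N) = f.positionsIso ι j := by
  simp only [positionsIso, coe_orderIsoOfFin_apply, hfg]

@[simp]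
lemma relativeRank_reorder : (f.reorder ι h).relativeRank ι = h := by
  refine Equiv.ext fun q => ((f.reorder ι h).positionsIso ι).injective (Subtype.ext ?_)
  rw [positionsIso_relativeRank, reorder_apply_embedding,
    coe_positionsIso_congr f (f.positions_reorder ι h)]

@[simp]
lemma reorder_relativeRank : f.reorder ι (f.relativeRank ι) = f := by
  ext x
  by_cases hx : x ∈ Set.range ι
  · obtain ⟨q, rfl⟩ := hx
    simp
  · rw [reorder_apply_of_notMem_range _ _ _ hx]

@[simp]
lemma reorder_reorder (h' : Q ≃ Fin (Fintype.card Q)) :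
    (f.reorder ι h).reorder ι h' = f.reorder ι h' := by
  ext x
  by_cases hx : x ∈ Set.range ι
  · obtain ⟨q, rfl⟩ := hx
    simp only [reorder_apply_embedding, coe_positionsIso_congr f (f.positions_reorder ι h)]
  · simp only [reorder_apply_of_notMem_range _ _ _ hx]

end Equiv

def IsAutonomous {R : Type*} [Preorder R] (s : Set R) : Prop :=
  ∀ r ∉ s, ∀ x ∈ s, ∀ y ∈ s, (r < x → r < y) ∧ (x < r → y < r)

namespace LinExt

variable {R Q : Type*} [PartialOrder R] [Fintype R] [PartialOrder Q] [Fintype Q]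

instance instFinite_s13 : Finite (LinExt R) := by
  unfold LinExt
  infer_instance

instance instNonempty_s13 : Nonempty (LinExt R) := by
  let _ : Fintype (LinearExtension R) := ‹Fintype R›
  let e := (Fintype.orderIsoFinOfCardEq (LinearExtension R) rfl).symm
  exact ⟨⟨(Equiv.refl R).trans e.toEquiv, fun x y hxy =>
    e.strictMono (toLinearExtension.monotone.strictMono_of_injective (fun _ _ h => h) hxy)⟩⟩

variable (ι : Q ↪o R)

noncomputable def restrict (f : LinExt R) : LinExt Q :=
  ⟨f.1.relativeRank ι.toEmbedding, fun x y hxy =>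
    (f.1.relativeRank_lt_iff _ x y).2 (f.2 _ _ (ι.lt_iff_lt.2 hxy))⟩

lemma restrict_lt_iff (f : LinExt R) (x y : Q) :
    (f.restrict ι).1 x < (f.restrict ι).1 y ↔ f.1 (ι x) < f.1 (ι y) :=
  f.1.relativeRank_lt_iff _ x y

variable {ι} (hι : IsAutonomous (Set.range ι))
include hι

lemma reorder_lt_reorder (f : LinExt R) (h : LinExt Q) {x y : R} (hxy : x < y) :
    f.1.reorder ι.toEmbedding h.1 x < f.1.reorder ι.toEmbedding h.1 y := by
  by_cases hx : x ∈ Set.range ι.toEmbedding <;> by_cases hy : y ∈ Set.range ι.toEmbedding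
  · obtain ⟨q, rfl⟩ := hx
    obtain ⟨q', rfl⟩ := hy
    rw [Equiv.reorder_apply_embedding, Equiv.reorder_apply_embedding]
    exact (f.1.positionsIso _).lt_iff_lt.2 (h.2 _ _ (ι.lt_iff_lt.1 hxy))
  · obtain ⟨q, rfl⟩ := hx
    obtain ⟨q', hq'⟩ := f.1.exists_apply_eq_positionsIso ι.toEmbedding (h.1 q)
    rw [Equiv.reorder_apply_embedding, Equiv.reorder_apply_of_notMem_range _ _ _ hy, ← hq']
    exact f.2 _ _ ((hι y hy _ ⟨q, rfl⟩ _ ⟨q', rfl⟩).2 hxy)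
  · obtain ⟨q, rfl⟩ := hy
    obtain ⟨q', hq'⟩ := f.1.exists_apply_eq_positionsIso ι.toEmbedding (h.1 q)
    rw [Equiv.reorder_apply_embedding, Equiv.reorder_apply_of_notMem_range _ _ _ hx, ← hq']
    exact f.2 _ _ ((hι x hx _ ⟨q, rfl⟩ _ ⟨q', rfl⟩).1 hxy)
  · rw [Equiv.reorder_apply_of_notMem_range _ _ _ hx,
      Equiv.reorder_apply_of_notMem_range _ _ _ hy]
    exact f.2 _ _ hxy

noncomputable def reorder (f : LinExt R) (h : LinExt Q) : LinExt R :=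
  ⟨f.1.reorder ι.toEmbedding h.1, fun _ _ => reorder_lt_reorder hι f h⟩

@[simp]
lemma restrict_reorder (f : LinExt R) (h : LinExt Q) : (f.reorder hι h).restrict ι = h :=
  Subtype.ext (f.1.relativeRank_reorder _ h.1)

@[simp]
lemma reorder_restrict (f : LinExt R) : f.reorder hι (f.restrict ι) = f :=
  Subtype.ext (f.1.reorder_relativeRank _)

@[simp]
lemma reorder_reorder (f : LinExt R) (h h' : LinExt Q) :
    (f.reorder hι h).reorder hι h' = f.reorder hι h' :=
  Subtype.ext (f.1.reorder_reorder _ h.1 h'.1)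

noncomputable def equivProdFiber (h₀ : LinExt Q) :
    LinExt R ≃ LinExt Q × {f : LinExt R // f.restrict ι = h₀} where
  toFun f := (f.restrict ι, ⟨f.reorder hι h₀, restrict_reorder hι f h₀⟩)
  invFun c := c.2.1.reorder hι c.1
  left_inv f := by simp
  right_inv := by
    rintro ⟨h, f, rfl⟩
    simp

lemma card_restrict_preimage (h₀ : LinExt Q) (p : LinExt Q → Prop) :
    Nat.card {f : LinExt R // p (f.restrict ι)} =
      Nat.card {h : LinExt Q // p h} * Nat.card {f : LinExt R // f.restrict ι = h₀} := by
  rw [← Nat.card_prod]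
  exact Nat.card_congr <|
    ((equivProdFiber hι h₀).subtypeEquiv fun _ => Iff.rfl).trans
      Equiv.prodSubtypeFstEquivSubtypeProd

theorem card_restrict_preimage_eq_div_mul (p : LinExt Q → Prop) :
    Nat.card {f : LinExt R // p (f.restrict ι)} =
      numExt R / numExt Q * Nat.card {h : LinExt Q // p h} := by
  obtain ⟨h₀⟩ : Nonempty (LinExt Q) := inferInstance
  have hQ : 0 < numExt Q := Nat.card_pos
  have hR : numExt R = numExt Q * Nat.card {f : LinExt R // f.restrict ι = h₀} := by
    simpa [numExt] using card_restrict_preimage hι h₀ fun _ => True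
  rw [card_restrict_preimage hι h₀, hR, Nat.mul_div_cancel_left _ hQ, mul_comm]

end LinExt

namespace LexAt

variable {P Q : Type*} [PartialOrder P] [PartialOrder Q] {i : P}

lemma inl_lt_inr_iff (p : {x : P // x ≠ i}) (q : Q) :
    @LT.lt (LexAt P i Q) _ (.inl p) (.inr q) ↔ p.1 < i :=
  ⟨fun h => h.1, fun h => ⟨h, fun h' => (h.trans h').false⟩⟩

lemma inr_lt_inl_iff (p : {x : P // x ≠ i}) (q : Q) :
    @LT.lt (LexAt P i Q) _ (.inr q) (.inl p) ↔ i < p.1 :=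
  ⟨fun h => h.1, fun h => ⟨h, fun h' => (h'.trans h).false⟩⟩

def inrEmbedding : Q ↪o LexAt P i Q :=
  OrderEmbedding.ofMapLEIff Sum.inr fun _ _ => Iff.rfl

@[simp]
lemma inrEmbedding_apply (q : Q) : (inrEmbedding q : LexAt P i Q) = Sum.inr q := rfl

lemma isAutonomous_range_inrEmbedding :
    IsAutonomous (Set.range (inrEmbedding : Q ↪o LexAt P i Q)) := by
  rintro (p | q) hr - ⟨x, rfl⟩ - ⟨y, rfl⟩
  · exact ⟨fun h => (inl_lt_inr_iff p y).2 ((inl_lt_inr_iff p x).1 h),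
      fun h => (inr_lt_inl_iff p y).2 ((inr_lt_inl_iff p x).1 h)⟩
  · exact absurd ⟨q, rfl⟩ hr

end LexAt

theorem gpc_counts_scale_general (P Q : Type) [PartialOrder P] [Fintype P] [DecidableEq P]
    [PartialOrder Q] [Fintype Q] (i : P) (a b c d : Q) :
    numExt (LexAt P i Q) = (numExt (LexAt P i Q) / numExt Q) * numExt Q ∧
    numBelow (LexAt P i Q) (Sum.inr a) (Sum.inr b) =
      (numExt (LexAt P i Q) / numExt Q) * numBelow Q a b ∧
    numBelow2 (LexAt P i Q) (Sum.inr a) (Sum.inr b) (Sum.inr c) (Sum.inr d) =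
      (numExt (LexAt P i Q) / numExt Q) * numBelow2 Q a b c d := by
  have scale := LinExt.card_restrict_preimage_eq_div_mul
    (LexAt.isAutonomous_range_inrEmbedding (P := P) (i := i) (Q := Q))
  have lt_iff := LinExt.restrict_lt_iff (LexAt.inrEmbedding (P := P) (i := i) (Q := Q))
  refine ⟨?_, ?_, ?_⟩
  · simpa [numExt] using scale fun _ => True
  · simpa only [numBelow, lt_iff, LexAt.inrEmbedding_apply] using scale fun h => h.1 a < h.1 b
  · simpa only [numBelow2, lt_iff, LexAt.inrEmbedding_apply] using
      scale fun h => h.1 a < h.1 b ∧ h.1 c < h.1 d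

/-- applying the GPC witnessing comparisons of `Q` inside `P ∘_i Q`,
with `k = e(P∘ᵢQ)/e(Q)`, we get `t₀′ = k·t₀`, `t₁′ = k·t₁` and `t₂′ = k·t₂`. -/
theorem gpc_counts_scale (P Q : Type) [PartialOrder P] [Fintype P] [DecidableEq P]
    [PartialOrder Q] [Fintype Q] (i : P) (a b c d : Q)
    (hab : ¬ a ≤ b ∧ ¬ b ≤ a)
    (hgold : numBelow Q a b + numBelow2 Q a b c d < numExt Q) :
    numExt (LexAt P i Q) = (numExt (LexAt P i Q) / numExt Q) * numExt Q ∧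
    numBelow (LexAt P i Q) (Sum.inr a) (Sum.inr b) =
      (numExt (LexAt P i Q) / numExt Q) * numBelow Q a b ∧
    numBelow2 (LexAt P i Q) (Sum.inr a) (Sum.inr b) (Sum.inr c) (Sum.inr d) =
      (numExt (LexAt P i Q) / numExt Q) * numBelow2 Q a b c d :=
  gpc_counts_scale_general P Q i a b c d
end
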